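/- arXiv:2402.06644 — 9 statements merged into one kernel-verified Lean document; each statement's English description precedes it below -/
import Mathlib

section
/- The set {0 (mod 2), 1 (mod 3), 1 (mod 4), 3 (mod 8), 3 (mod 12), 23 (mod 24)} is a covering system of the integers; that is, every integer k satisfies at least one of these six congruences. -/
theorem chen_covering_system_one (k : ℤ) :
    k ≡ 0 [ZMOD 2] ∨ k ≡ 1 [ZMOD 3] ∨ k ≡ 1 [ZMOD 4] ∨
    k ≡ 3 [ZMOD 8] ∨ k ≡ 3 [ZMOD 12] ∨ k ≡ 23 [ZMOD 24] := by
  simp only [Int.ModEq, ZMod.intCast_eq_intCast_iff']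
  omega
end

section
/- The set {1 (mod 2), 0 (mod 3), 0 (mod 4), 2 (mod 8), 2 (mod 12), 22 (mod 24)} is a covering system of the integers. -/
/-! All six moduli divide 24, so membership in each class depends only on `k % 24`;
each of the 24 residues is checked to lie in one of the classes. -/

theorem chen_covering_system_two (k : ℤ) :
    k ≡ 1 [ZMOD 2] ∨ k ≡ 0 [ZMOD 3] ∨ k ≡ 0 [ZMOD 4] ∨
    k ≡ 2 [ZMOD 8] ∨ k ≡ 2 [ZMOD 12] ∨ k ≡ 22 [ZMOD 24] := by
  simp only [Int.ModEq]
  have hr₀ : 0 ≤ k % 24 := Int.emod_nonneg k (by norm_num)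
  have hr₁ : k % 24 < 24 := Int.emod_lt_of_pos k (by norm_num)
  interval_cases hr : k % 24 <;> omega
end

section
/- For every natural number k and every integer x with x ≡ 7629217 (mod 11184810), at least one of the primes 3, 5, 7, 13, 17, 241 divides x − 2^k. -/
/-!
The order of `2` modulo `3, 5, 7, 13, 17, 241` is `2, 4, 3, 12, 8, 24`, and modulo these primes
`7629217 ≡ 2 ^ r` for `r = 0, 1, 0, 7, 3, 23` respectively. These residue classes `r mod ord_p 2`
cover `ℕ`, so whichever class `k` lies in, the matching prime divides `x - 2 ^ k`.
-/

theorem erdos_covering (k : ℕ) :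
    k ≡ 0 [MOD 2] ∨ k ≡ 1 [MOD 4] ∨ k ≡ 0 [MOD 3] ∨
    k ≡ 7 [MOD 12] ∨ k ≡ 3 [MOD 8] ∨ k ≡ 23 [MOD 24] := by
  simp only [Nat.ModEq]
  omega

theorem Int.pow_modEq_pow_of_pow_modEq_one {b p : ℤ} {n k r : ℕ} (hb : b ^ n ≡ 1 [ZMOD p])
    (hk : k ≡ r [MOD n]) : b ^ k ≡ b ^ r [ZMOD p] := by
  have reduce (m : ℕ) : b ^ m ≡ b ^ (m % n) [ZMOD p] := by
    conv_lhs => rw [← Nat.div_add_mod m n, pow_add, pow_mul]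
    simpa using (hb.pow (m / n)).mul_right (b ^ (m % n))
  calc b ^ k ≡ b ^ (k % n) [ZMOD p] := reduce k
    _ = b ^ (r % n) := by rw [hk]
    _ ≡ b ^ r [ZMOD p] := (reduce r).symm

theorem Int.dvd_sub_pow_of_modEq {m p x a b : ℤ} {n k r : ℕ} (hpm : p ∣ m)
    (hx : x ≡ a [ZMOD m]) (hb : b ^ n ≡ 1 [ZMOD p]) (ha : a ≡ b ^ r [ZMOD p])
    (hk : k ≡ r [MOD n]) : p ∣ x - b ^ k :=
  ((hx.of_dvd hpm).trans (ha.trans (pow_modEq_pow_of_pow_modEq_one hb hk).symm)).symm.dvd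

theorem erdos_divisibility (k : ℕ) (x : ℤ) (hx : x ≡ 7629217 [ZMOD 11184810]) :
    (3 : ℤ) ∣ x - 2 ^ k ∨ (5 : ℤ) ∣ x - 2 ^ k ∨ (7 : ℤ) ∣ x - 2 ^ k ∨
    (13 : ℤ) ∣ x - 2 ^ k ∨ (17 : ℤ) ∣ x - 2 ^ k ∨ (241 : ℤ) ∣ x - 2 ^ k := by
  rcases erdos_covering k with hk | hk | hk | hk | hk | hk
  · exact .inl (Int.dvd_sub_pow_of_modEq (by norm_num) hx (by decide) (by decide) hk)
  · exact .inr <| .inl (Int.dvd_sub_pow_of_modEq (by norm_num) hx (by decide) (by decide) hk)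
  · exact .inr <| .inr <| .inl
      (Int.dvd_sub_pow_of_modEq (by norm_num) hx (by decide) (by decide) hk)
  · exact .inr <| .inr <| .inr <| .inl
      (Int.dvd_sub_pow_of_modEq (by norm_num) hx (by decide) (by decide) hk)
  · exact .inr <| .inr <| .inr <| .inr <| .inl
      (Int.dvd_sub_pow_of_modEq (by norm_num) hx (by decide) (by decide) hk)
  · exact .inr <| .inr <| .inr <| .inr <| .inr
      (Int.dvd_sub_pow_of_modEq (by norm_num) hx (by decide) (by decide) hk)
end

section
/- No integer of the form p + 2^k, where p is prime and k is a natural number, is congruent to 7629217 modulo 11184810. -/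
lemma aux (p : ℕ) (hp : p.Prime) (q : ℕ) (C : ℤ)
    (hq1 : q ≠ 1) (hdvd : (q : ℤ) ∣ C)
    (hC : ¬ ((q : ℤ) ≡ C [ZMOD 11184810]))
    (h : (p : ℤ) ≡ C [ZMOD 11184810]) (hqN : (q : ℤ) ∣ 11184810) : False := by
  have h2 : (p : ℤ) ≡ C [ZMOD (q : ℤ)] := h.of_dvd hqN
  have h3 : (q : ℤ) ∣ (p : ℤ) := by
    have := h2.dvd
    have := dvd_sub hdvd this
    simpa using this
  have h4 : q ∣ p := Int.natCast_dvd_natCast.mp h3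
  rcases hp.eq_one_or_self_of_dvd q h4 with h5 | h5
  · exact hq1 h5
  · subst h5; exact hC h

lemma pow_period (m : ℕ) : (2 : ℤ) ^ (24 * m + 1) ≡ 2 [ZMOD 11184810] := by
  induction m with
  | zero => rfl
  | succ n ih =>
    have e : 24 * (n + 1) + 1 = (24 * n + 1) + 24 := by ring
    rw [e, pow_add]
    calc (2:ℤ) ^ (24 * n + 1) * 2 ^ 24 ≡ 2 * 2 ^ 24 [ZMOD 11184810] := ih.mul_right _
      _ ≡ 2 [ZMOD 11184810] := by decide

lemma pow_mod (j : ℕ) : (2 : ℤ) ^ (j + 1) ≡ 2 ^ (j % 24 + 1) [ZMOD 11184810] := by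
  conv_lhs => rw [← Nat.div_add_mod j 24]
  have e : 24 * (j / 24) + j % 24 + 1 = (24 * (j / 24) + 1) + j % 24 := by omega
  rw [e, pow_add]
  have e2 : (2 : ℤ) ^ (j % 24 + 1) = 2 * 2 ^ (j % 24) := by
    rw [add_comm, pow_add]; ring
  rw [e2]
  exact (pow_period _).mul_right _

theorem erdos_progression_avoids (p : ℕ) (hp : p.Prime) (k : ℕ) :
    ¬ ((p : ℤ) + 2 ^ k ≡ 7629217 [ZMOD 11184810]) := by
  intro h
  have h' : (p : ℤ) ≡ 7629217 - 2 ^ k [ZMOD 11184810] := by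
    have := h.sub_right ((2 : ℤ) ^ k)
    simpa using this
  rcases k with _ | j
  · exact aux p hp 3 _ (by norm_num) (by norm_num) (by decide) h' (by norm_num)
  · have h'' : (p : ℤ) ≡ 7629217 - 2 ^ (j % 24 + 1) [ZMOD 11184810] :=
      h'.trans ((Int.ModEq.refl 7629217).sub (pow_mod j))
    have hj : j % 24 < 24 := Nat.mod_lt _ (by norm_num)
    set r := j % 24 with hr
    clear_value r
    interval_cases r
    · exact aux p hp 5 _ (by norm_num) (by norm_num) (by decide) h'' (by norm_num)
    · exact aux p hp 3 _ (by norm_num) (by norm_num) (by decide) h'' (by norm_num)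
    · exact aux p hp 7 _ (by norm_num) (by norm_num) (by decide) h'' (by norm_num)
    · exact aux p hp 3 _ (by norm_num) (by norm_num) (by decide) h'' (by norm_num)
    · exact aux p hp 5 _ (by norm_num) (by norm_num) (by decide) h'' (by norm_num)
    · exact aux p hp 3 _ (by norm_num) (by norm_num) (by decide) h'' (by norm_num)
    · exact aux p hp 13 _ (by norm_num) (by norm_num) (by decide) h'' (by norm_num)
    · exact aux p hp 3 _ (by norm_num) (by norm_num) (by decide) h'' (by norm_num)
    · exact aux p hp 5 _ (by norm_num) (by norm_num) (by decide) h'' (by norm_num)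
    · exact aux p hp 3 _ (by norm_num) (by norm_num) (by decide) h'' (by norm_num)
    · exact aux p hp 17 _ (by norm_num) (by norm_num) (by decide) h'' (by norm_num)
    · exact aux p hp 3 _ (by norm_num) (by norm_num) (by decide) h'' (by norm_num)
    · exact aux p hp 5 _ (by norm_num) (by norm_num) (by decide) h'' (by norm_num)
    · exact aux p hp 3 _ (by norm_num) (by norm_num) (by decide) h'' (by norm_num)
    · exact aux p hp 7 _ (by norm_num) (by norm_num) (by decide) h'' (by norm_num)
    · exact aux p hp 3 _ (by norm_num) (by norm_num) (by decide) h'' (by norm_num)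
    · exact aux p hp 5 _ (by norm_num) (by norm_num) (by decide) h'' (by norm_num)
    · exact aux p hp 3 _ (by norm_num) (by norm_num) (by decide) h'' (by norm_num)
    · exact aux p hp 13 _ (by norm_num) (by norm_num) (by decide) h'' (by norm_num)
    · exact aux p hp 3 _ (by norm_num) (by norm_num) (by decide) h'' (by norm_num)
    · exact aux p hp 5 _ (by norm_num) (by norm_num) (by decide) h'' (by norm_num)
    · exact aux p hp 3 _ (by norm_num) (by norm_num) (by decide) h'' (by norm_num)
    · exact aux p hp 241 _ (by norm_num) (by norm_num) (by decide) h'' (by norm_num)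
    · exact aux p hp 3 _ (by norm_num) (by norm_num) (by decide) h'' (by norm_num)
end

section
/- No integer of the form p + 2^k, where p is prime and k is a natural number, is congruent to 992077 modulo 11184810. -/
/-!
Write N = 11184810 = 2 · 3 · 5 · 7 · 13 · 17 · 241. Modulo N, the powers of 2 repeat with period 24
from 2¹ on, since 2 has order 2, 4, 3, 12, 8, 24 modulo 3, 5, 7, 13, 17, 241. For each of the 25
residues 2ᵏ (0 ≤ k ≤ 24) one of the odd primes q ∣ N divides 992077 - 2ᵏ (a covering system), so
a prime p with p + 2ᵏ ≡ 992077 (mod N) is divisible by q, hence equals q; but 992077 - 2ᵏ is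
never q itself modulo N.
-/

theorem exists_lt_pow_eq_pow_of_pow_add_eq {M : Type*} [Monoid M] {a : M} {m d : ℕ} (hd : 0 < d)
    (h : a ^ (m + d) = a ^ m) (k : ℕ) : ∃ r < m + d, a ^ k = a ^ r := by
  induction k using Nat.strong_induction_on with
  | _ k ih =>
    by_cases hk : k < m + d
    · exact ⟨k, hk, rfl⟩
    · obtain ⟨j, rfl⟩ : ∃ j, k = j + (m + d) := ⟨k - (m + d), by omega⟩
      obtain ⟨r, hr, hj⟩ := ih (j + m) (by omega)
      exact ⟨r, hr, by rw [pow_add, h, ← pow_add, hj]⟩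

theorem ZMod.natCast_ne_of_dvd_val {n p q : ℕ} (hp : p.Prime) (hq : q.Prime) (hqn : q ∣ n)
    {c : ZMod n} (hc : q ∣ c.val) (hcq : c ≠ q) : (p : ZMod n) ≠ c := by
  rintro rfl
  rw [ZMod.val_natCast, Nat.dvd_mod_iff hqn] at hc
  exact hcq (by rw [(Nat.prime_dvd_prime_iff_eq hq hp).mp hc])

theorem exists_mem_primeFactorsList_dvd_val_sub_two_pow {r : ℕ} (hr : r < 25) :
    ∃ q ∈ Nat.primeFactorsList 11184810,
      q ∣ (992077 - 2 ^ r : ZMod 11184810).val ∧ (992077 - 2 ^ r : ZMod 11184810) ≠ q := by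
  simp only [Nat.primeFactorsList_ofNat]
  interval_cases r <;> decide

theorem chen_progression_one_avoids (p : ℕ) (hp : p.Prime) (k : ℕ) :
    ¬ ((p : ℤ) + 2 ^ k ≡ 992077 [ZMOD 11184810]) := by
  intro h
  obtain ⟨r, hr, hpow⟩ := exists_lt_pow_eq_pow_of_pow_add_eq (a := (2 : ZMod 11184810))
    (m := 1) (d := 24) (by norm_num) (by decide) k
  obtain ⟨q, hq, hdvd, hne⟩ := exists_mem_primeFactorsList_dvd_val_sub_two_pow hr
  refine ZMod.natCast_ne_of_dvd_val hp (Nat.prime_of_mem_primeFactorsList hq)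
    (Nat.dvd_of_mem_primeFactorsList hq) hdvd hne ?_
  rw [← hpow, eq_sub_iff_add_eq]
  exact_mod_cast (ZMod.intCast_eq_intCast_iff _ _ _).mpr h
end

section
/- Let {a_1 (mod d_1), …, a_n (mod d_n)} be a covering system, and let p_1, …, p_n be pairwise distinct primes with p_i dividing 2^{d_i} − 1 for each i. Set M = 2 · p_1 · p_2 · ⋯ · p_n. Then there exists a residue a modulo M such that for every natural number k and every integer x ≡ a (mod M), some p_i divides x − 2^k. -/
/-!
Choose `A` by the Chinese remainder theorem with `A ≡ 2 ^ rᵢ (mod pᵢ)`, where `rᵢ` is a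
nonnegative representative of `aᵢ (mod dᵢ)`. Given `k`, the covering provides `i` with
`k ≡ aᵢ ≡ rᵢ (mod dᵢ)`; since `2 ^ dᵢ ≡ 1 (mod pᵢ)`, the power `2 ^ k` modulo `pᵢ` only depends
on `k` modulo `dᵢ`, so `2 ^ k ≡ 2 ^ rᵢ ≡ A ≡ x (mod pᵢ)`.
-/

namespace Nat

theorem pow_modEq_pow_mod {b m d : ℕ} (h : b ^ d ≡ 1 [MOD m]) (k : ℕ) :
    b ^ k ≡ b ^ (k % d) [MOD m] :=
  calc b ^ k = (b ^ d) ^ (k / d) * b ^ (k % d) := by rw [← pow_mul, ← pow_add, Nat.div_add_mod]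
    _ ≡ 1 ^ (k / d) * b ^ (k % d) [MOD m] := (h.pow _).mul_right _
    _ = b ^ (k % d) := by rw [one_pow, one_mul]

theorem pow_modEq_pow_of_modEq {b m d k l : ℕ} (h : b ^ d ≡ 1 [MOD m]) (hkl : k ≡ l [MOD d]) :
    b ^ k ≡ b ^ l [MOD m] := by
  have hk := pow_modEq_pow_mod h k
  rw [hkl] at hk
  exact hk.trans (pow_modEq_pow_mod h l).symm

/-- For `d = 0` the representative is `a.toNat`, which is right because then `a = k ≥ 0`. -/
theorem modEq_toNat_emod_of_intCast_modEq {k d : ℕ} {a : ℤ} (h : (k : ℤ) ≡ a [ZMOD d]) :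
    k ≡ (a % d).toNat [MOD d] := by
  rw [← h.eq, ← Int.natCast_mod, Int.toNat_natCast]
  exact (Nat.mod_modEq k d).symm

theorem exists_modEq_of_injective_of_prime {ι : Type*} [Fintype ι] {p : ι → ℕ}
    (hp : ∀ i, (p i).Prime) (hinj : Function.Injective p) (c : ι → ℕ) :
    ∃ A : ℕ, ∀ i, A ≡ c i [MOD p i] := by
  have hcop : Set.Pairwise (Finset.univ : Finset ι) (Function.onFun Coprime p) := fun i _ j _ hij =>
    (coprime_primes (hp i) (hp j)).2 (hinj.ne hij)
  obtain ⟨A, hA⟩ := chineseRemainderOfFinset c p Finset.univ (fun i _ => (hp i).ne_zero) hcop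
  exact ⟨A, fun i => hA i (Finset.mem_univ i)⟩

end Nat

theorem cdl_arithmetic_progression (n : ℕ) (a : Fin n → ℤ) (d : Fin n → ℕ)
    (hcov : ∀ k : ℤ, ∃ i, k ≡ a i [ZMOD d i])
    (p : Fin n → ℕ) (hp : ∀ i, (p i).Prime) (hinj : Function.Injective p)
    (hdvd : ∀ i, p i ∣ 2 ^ d i - 1) :
    ∃ A : ℤ, ∀ k : ℕ, ∀ x : ℤ,
      x ≡ A [ZMOD (2 * ∏ i, p i : ℕ)] → ∃ i, (p i : ℤ) ∣ x - 2 ^ k := by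
  obtain ⟨A, hA⟩ :=
    Nat.exists_modEq_of_injective_of_prime hp hinj fun i => 2 ^ (a i % d i).toNat
  refine ⟨A, fun k x hx => ?_⟩
  obtain ⟨i, hi⟩ := hcov k
  have hperiod : 2 ^ d i ≡ 1 [MOD p i] :=
    ((Nat.modEq_iff_dvd' Nat.one_le_two_pow).2 (hdvd i)).symm
  have hkA : 2 ^ k ≡ A [MOD p i] :=
    (Nat.pow_modEq_pow_of_modEq hperiod (Nat.modEq_toNat_emod_of_intCast_modEq hi)).trans
      (hA i).symm
  have hxA : x ≡ A [ZMOD p i] :=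
    hx.of_dvd <| Int.natCast_dvd_natCast.2 <|
      dvd_mul_of_dvd_right (Finset.dvd_prod_of_mem p (Finset.mem_univ i)) 2
  refine ⟨i, Int.ModEq.dvd ?_⟩
  exact_mod_cast (Int.natCast_modEq_iff.2 hkA).trans hxA.symm
end

section
/- For every integer m > 1 with m ≠ 6, there exists a prime p such that p divides 2^m − 1 but p does not divide 2^j − 1 for any positive integer j < m. -/
/-!
Let `Φ = Φ_m(2)`, a divisor of `2^m - 1`. For a prime `p ∣ Φ`, the order of `2` modulo `p` is
the `p`-free part of `m`; so if `p ∤ m`, then `p` is a primitive divisor. A prime `p ∣ Φ` with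
`p ∣ m` is the largest prime factor of `m` (every other prime factor of `m` divides the order of
`2`, hence `p - 1`), so there is at most one such `p`, and lifting the exponent gives `p² ∤ Φ`.
Writing `m = p^k s` with `p ∤ s` and `Q = 2^(p^(k-1))`, we get `Φ = Φ_{sp}(Q) = Φ_s(Q^p) / Φ_s(Q)`,
which exceeds `((Q^p - 1) / (Q + 1))^φ(s) ≥ p` unless `Q = 2`, `p = 3`, i.e. `m = 6`. So for
`m ≠ 6` the integer `Φ > 1` is not `p`, and it has a primitive prime divisor.
-/

open Polynomial

theorem Nat.dvd_pow_sub_one_iff_orderOf_dvd {n a j : ℕ} (ha : a ≠ 0) :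
    n ∣ a ^ j - 1 ↔ orderOf (a : ZMod n) ∣ j := by
  rw [orderOf_dvd_iff_pow_eq_one, ← ZMod.natCast_eq_zero_iff,
    Nat.cast_sub (Nat.one_le_pow _ _ (Nat.pos_of_ne_zero ha)), sub_eq_zero]
  push_cast
  rfl

theorem mul_add_one_lt_pow {Q : ℤ} {p : ℕ} (hQ : 2 ≤ Q) (hp : 3 ≤ p) (hQp : Q = 2 → 5 ≤ p) :
    p * (Q + 1) < Q ^ p := by
  obtain ⟨p₀, hp₀p, hp₀, hbase⟩ : ∃ p₀, p₀ ≤ p ∧ 1 ≤ p₀ ∧ p₀ * (Q + 1) < Q ^ p₀ := by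
    rcases hQ.eq_or_lt with rfl | hQ3
    · exact ⟨5, hQp rfl, by norm_num, by norm_num⟩
    · have : 9 ≤ Q * Q := by nlinarith
      exact ⟨3, hp, by norm_num, by push_cast; nlinarith⟩
  clear hp hQp
  induction p, hp₀p using Nat.le_induction with
  | base => exact hbase
  | succ n hn ih =>
    have hn1 : (1 : ℤ) ≤ n := by exact_mod_cast hp₀.trans hn
    have h1 : 2 * Q ^ n ≤ Q ^ n * Q := by nlinarith [pow_pos (by omega : (0 : ℤ) < Q) n]
    have h2 : Q + 1 ≤ n * (Q + 1) := by nlinarith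
    push_cast
    rw [pow_succ]
    linarith

namespace Polynomial

theorem ne_zero_of_prime_dvd_cyclotomic_eval {m p : ℕ} {x : ℤ} (hp : p.Prime)
    (h : (p : ℤ) ∣ (cyclotomic m ℤ).eval x) : m ≠ 0 := by
  rintro rfl
  simp only [cyclotomic_zero, eval_one, Int.natCast_dvd_ofNat, Nat.dvd_one] at h
  exact hp.ne_one h

theorem isRoot_cyclotomic_zmod_of_dvd_eval {m p : ℕ} {x : ℤ}
    (h : (p : ℤ) ∣ (cyclotomic m ℤ).eval x) : (cyclotomic m (ZMod p)).IsRoot (x : ZMod p) := by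
  rwa [← map_cyclotomic_int, IsRoot, eval_intCast_map, eq_intCast,
    ZMod.intCast_zmod_eq_zero_iff_dvd]

theorem isPrimitiveRoot_ordCompl_of_dvd_cyclotomic_eval {m p : ℕ} {x : ℤ} (hp : p.Prime)
    (h : (p : ℤ) ∣ (cyclotomic m ℤ).eval x) : IsPrimitiveRoot (x : ZMod p) (ordCompl[p] m) := by
  have := Fact.mk hp
  have hm := ne_zero_of_prime_dvd_cyclotomic_eval hp h
  have : NeZero ((ordCompl[p] m : ℕ) : ZMod p) :=
    ⟨by rw [Ne, ZMod.natCast_eq_zero_iff]; exact Nat.not_dvd_ordCompl hp hm⟩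
  have hroot := isRoot_cyclotomic_zmod_of_dvd_eval h
  rwa [← Nat.ordProj_mul_ordCompl_eq_self m p, isRoot_cyclotomic_prime_pow_mul_iff_of_charP]
    at hroot

theorem lt_of_dvd_of_dvd_cyclotomic_eval {m p q : ℕ} {x : ℤ} (hp : p.Prime) (hq : q.Prime)
    (hqp : q ≠ p) (hqm : q ∣ m) (h : (p : ℤ) ∣ (cyclotomic m ℤ).eval x) : q < p := by
  have := Fact.mk hp
  have hprim := isPrimitiveRoot_ordCompl_of_dvd_cyclotomic_eval hp h
  have hm := ne_zero_of_prime_dvd_cyclotomic_eval hp h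
  have hq_dvd : q ∣ ordCompl[p] m :=
    (((Nat.coprime_primes hq hp).2 hqp).pow_right _).dvd_of_dvd_mul_left
      (by rwa [Nat.ordProj_mul_ordCompl_eq_self])
  have hord_dvd : ordCompl[p] m ∣ p - 1 := by
    rw [hprim.eq_orderOf]
    exact ZMod.orderOf_dvd_card_sub_one (hprim.ne_zero (Nat.ordCompl_pos p hm).ne')
  have := Nat.le_of_dvd (by have := hp.two_le; omega) (hq_dvd.trans hord_dvd)
  omega

theorem eq_of_dvd_of_dvd_cyclotomic_eval {m p q : ℕ} {x : ℤ} (hp : p.Prime) (hq : q.Prime)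
    (hpm : p ∣ m) (hqm : q ∣ m) (hpx : (p : ℤ) ∣ (cyclotomic m ℤ).eval x)
    (hqx : (q : ℤ) ∣ (cyclotomic m ℤ).eval x) : p = q := by
  by_contra hpq
  exact lt_asymm (lt_of_dvd_of_dvd_cyclotomic_eval hp hq (Ne.symm hpq) hqm hpx)
    (lt_of_dvd_of_dvd_cyclotomic_eval hq hp hpq hpm hqx)

theorem cyclotomic_mul_dvd_geom_sum (R : Type*) [CommRing R] [IsDomain R] {d k : ℕ}
    (hd : d ≠ 0) (hk : 1 < k) : cyclotomic (d * k) R ∣ ∑ i ∈ Finset.range k, (X ^ d) ^ i := by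
  have hmem : d ∈ (d * k).properDivisors :=
    Nat.mem_properDivisors.2 ⟨dvd_mul_right d k, lt_mul_right (Nat.pos_of_ne_zero hd) hk⟩
  have h := X_pow_sub_one_mul_cyclotomic_dvd_X_pow_sub_one_of_dvd R hmem
  rw [pow_mul, ← mul_geom_sum (X ^ d)] at h
  have hX : (X ^ d - 1 : R[X]) ≠ 0 := by
    simpa using X_pow_sub_C_ne_zero (Nat.pos_of_ne_zero hd) (1 : R)
  exact (mul_dvd_mul_iff_left hX).1 h

theorem not_sq_dvd_cyclotomic_eval {m p : ℕ} {x : ℤ} (hp : p.Prime) (hp_odd : Odd p)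
    (hpm : p ∣ m) (h : (p : ℤ) ∣ (cyclotomic m ℤ).eval x) :
    ¬ (p : ℤ) ^ 2 ∣ (cyclotomic m ℤ).eval x := by
  have hm := ne_zero_of_prime_dvd_cyclotomic_eval hp h
  have hprim := isPrimitiveRoot_ordCompl_of_dvd_cyclotomic_eval hp h
  obtain ⟨d, rfl⟩ := hpm
  have hp' : Prime (p : ℤ) := Nat.prime_iff_prime_int.mp hp
  have hy : (p : ℤ) ∣ x ^ d - 1 := by
    have hxd : (x : ZMod p) ^ d = 1 := (hprim.pow_eq_one_iff_dvd d).2 <| by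
      rw [Nat.ordCompl_mul, hp.factorization_self, pow_one, Nat.div_self hp.pos, one_mul]
      exact Nat.ordCompl_dvd d p
    rw [← ZMod.intCast_zmod_eq_zero_iff_dvd]
    push_cast
    rw [hxd, sub_self]
  have hy' : ¬ (p : ℤ) ∣ x ^ d := fun hdvd =>
    hp'.not_dvd_one (by simpa using dvd_sub hdvd hy)
  have hgeom := emultiplicity_geom_sum₂_eq_one hp' hp_odd (y := 1) (by simpa using hy) hy'
  simp only [one_pow, mul_one] at hgeom
  intro hsq
  have hdvd := eval_dvd (x := x)
    (cyclotomic_mul_dvd_geom_sum ℤ (k := p) (right_ne_zero_of_mul hm) hp.one_lt)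
  rw [mul_comm] at hdvd
  simp only [eval_finsetSum, eval_pow, eval_X] at hdvd
  exact emultiplicity_lt_iff_not_dvd.1 (by rw [hgeom]; norm_num) (hsq.trans hdvd)

theorem odd_of_prime_dvd_cyclotomic_eval_two {m p : ℕ} (hp : p.Prime)
    (h : (p : ℤ) ∣ (cyclotomic m ℤ).eval 2) : Odd p := by
  refine hp.eq_two_or_odd'.resolve_left ?_
  rintro rfl
  have hprim := isPrimitiveRoot_ordCompl_of_dvd_cyclotomic_eval hp h
  exact hprim.ne_zero (Nat.ordCompl_pos 2 (ne_zero_of_prime_dvd_cyclotomic_eval hp h)).ne' rfl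

theorem cyclotomic_expand_prime_pow_eq {p n : ℕ} (hp : p.Prime) (hpn : p ∣ n) (R : Type*)
    [CommRing R] (j : ℕ) : expand R (p ^ j) (cyclotomic n R) = cyclotomic (n * p ^ j) R := by
  induction j with
  | zero => simp
  | succ j ih =>
    rw [pow_succ', expand_mul, ih, cyclotomic_expand_eq_cyclotomic hp (hpn.mul_right _), mul_assoc,
      mul_comm (p ^ j)]

theorem eval_cyclotomic_eq_eval_cyclotomic_ordCompl_mul {m p : ℕ} (hp : p.Prime) (hpm : p ∣ m)
    (hm : m ≠ 0) (x : ℤ) : (cyclotomic m ℤ).eval x =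
      (cyclotomic (ordCompl[p] m * p) ℤ).eval (x ^ p ^ (m.factorization p - 1)) := by
  have hk := hp.factorization_pos_of_dvd hm hpm
  rw [← expand_eval, cyclotomic_expand_prime_pow_eq hp (dvd_mul_left p _), mul_assoc, ← pow_succ',
    Nat.sub_add_cancel hk, mul_comm, Nat.ordProj_mul_ordCompl_eq_self]

theorem prime_lt_cyclotomic_eval_mul {p s : ℕ} {Q : ℤ} (hp : p.Prime) (hps : ¬p ∣ s)
    (hs : 2 ≤ s) (hQ : 1 < Q) (hpQ : p * (Q + 1) < Q ^ p) :
    (p : ℤ) < (cyclotomic (s * p) ℤ).eval Q := by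
  have hcast (n : ℕ) : (((cyclotomic n ℤ).eval Q : ℤ) : ℝ) = (cyclotomic n ℝ).eval (Q : ℝ) := by
    simpa using (cyclotomic.eval_apply Q n (Int.castRingHom ℝ)).symm
  have hQ' : (1 : ℝ) < Q := by exact_mod_cast hQ
  have hpQ' : (p : ℝ) * (Q + 1) ≤ (Q : ℝ) ^ p - 1 := by
    have : p * (Q + 1) + 1 ≤ Q ^ p := hpQ
    have : ((p * (Q + 1) + 1 : ℤ) : ℝ) ≤ ((Q ^ p : ℤ) : ℝ) := by exact_mod_cast this
    push_cast at this
    linarith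
  have hfactor : (cyclotomic (s * p) ℝ).eval (Q : ℝ) * (cyclotomic s ℝ).eval (Q : ℝ) =
      (cyclotomic s ℝ).eval ((Q : ℝ) ^ p) := by
    rw [← eval_mul, ← cyclotomic_expand_eq_cyclotomic_mul hp hps, expand_eval]
  have htot : s.totient ≠ 0 := (Nat.totient_pos.2 (by omega)).ne'
  have hp1 : (1 : ℝ) ≤ p := by exact_mod_cast hp.one_lt.le
  have key : (p : ℝ) * (cyclotomic s ℝ).eval (Q : ℝ) <
      (cyclotomic (s * p) ℝ).eval (Q : ℝ) * (cyclotomic s ℝ).eval (Q : ℝ) :=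
    calc (p : ℝ) * (cyclotomic s ℝ).eval (Q : ℝ) ≤ p * ((Q : ℝ) + 1) ^ s.totient := by
          gcongr; exact cyclotomic_eval_le_add_one_pow_totient hQ' s
      _ ≤ (p * ((Q : ℝ) + 1)) ^ s.totient := by
          rw [mul_pow]; gcongr; exact le_self_pow₀ hp1 htot
      _ ≤ ((Q : ℝ) ^ p - 1) ^ s.totient := by gcongr
      _ < (cyclotomic s ℝ).eval ((Q : ℝ) ^ p) :=
          sub_one_pow_totient_lt_cyclotomic_eval hs (one_lt_pow₀ hQ' hp.ne_zero)
      _ = _ := hfactor.symm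
  have := lt_of_mul_lt_mul_right key (cyclotomic_pos' s hQ').le
  rw [← hcast] at this
  exact_mod_cast this

theorem prime_lt_cyclotomic_eval_two {m p : ℕ} (hp : p.Prime) (hpm : p ∣ m) (hm6 : m ≠ 6)
    (h : (p : ℤ) ∣ (cyclotomic m ℤ).eval 2) : (p : ℤ) < (cyclotomic m ℤ).eval 2 := by
  have := Fact.mk hp
  have hm := ne_zero_of_prime_dvd_cyclotomic_eval hp h
  have hprim := isPrimitiveRoot_ordCompl_of_dvd_cyclotomic_eval hp h
  have hp_odd := odd_of_prime_dvd_cyclotomic_eval_two hp h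
  have hk := hp.factorization_pos_of_dvd hm hpm
  set s := ordCompl[p] m with hs_def
  have hord : orderOf (2 : ZMod p) = s := by simpa using hprim.eq_orderOf.symm
  have hs_dvd : s ∣ p - 1 := hord ▸ ZMod.orderOf_dvd_card_sub_one
    (by simpa using hprim.ne_zero (Nat.ordCompl_pos p hm).ne')
  have hs1 : s ≠ 1 := fun hs1 => hp.ne_one <| Nat.dvd_one.1 <|
    (Nat.dvd_pow_sub_one_iff_orderOf_dvd (a := 2) (j := 1) two_ne_zero).2 (by simp [hord, hs1])
  have hs2 : 2 ≤ s := by have := Nat.ordCompl_pos p hm; omega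
  have hp3 : 3 ≤ p := by have := hp.two_le; rcases hp_odd with ⟨r, hr⟩; omega
  have hQ : (2 : ℤ) ≤ 2 ^ p ^ (m.factorization p - 1) :=
    le_self_pow₀ (by norm_num) (pow_pos hp.pos _).ne'
  rw [eval_cyclotomic_eq_eval_cyclotomic_ordCompl_mul hp hpm hm]
  refine prime_lt_cyclotomic_eval_mul hp (Nat.not_dvd_ordCompl hp hm) hs2
    (one_lt_two.trans_le hQ) (mul_add_one_lt_pow hQ hp3 fun hQ2 => ?_)
  -- The bound fails only for `Q = 2`, `p = 3`, which forces `m = 6` (where `Φ₆(2) = 3`).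
  have hk1 : m.factorization p = 1 := by
    have : p ^ (m.factorization p - 1) = 1 :=
      (pow_right_inj₀ two_pos (by norm_num)).1 (hQ2.trans (pow_one 2).symm)
    have := Nat.pow_eq_one.1 this
    omega
  by_contra hp5
  have hp3 : p = 3 := by rcases hp_odd with ⟨r, hr⟩; omega
  have hs : s = 2 := by
    have := Nat.le_of_dvd (by omega) hs_dvd
    omega
  have := Nat.ordProj_mul_ordCompl_eq_self m p
  rw [← hs_def, hs, hk1, hp3] at this
  omega

theorem exists_prime_dvd_cyclotomic_eval_two_not_dvd {m : ℕ} (hm : 1 < m) (hm6 : m ≠ 6) :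
    ∃ p : ℕ, p.Prime ∧ (p : ℤ) ∣ (cyclotomic m ℤ).eval 2 ∧ ¬p ∣ m := by
  by_contra! hcon
  set N := ((cyclotomic m ℤ).eval 2).natAbs
  have hN : 1 < N := by simpa using sub_one_lt_natAbs_cyclotomic_eval (q := 2) hm (by norm_num)
  have hNΦ : (N : ℤ) = (cyclotomic m ℤ).eval 2 :=
    Int.natAbs_of_nonneg (cyclotomic_pos' m one_lt_two).le
  have hdvd_iff (q : ℕ) : q ∣ N ↔ (q : ℤ) ∣ (cyclotomic m ℤ).eval 2 := Int.natCast_dvd.symm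
  obtain ⟨p, hp, r, hr⟩ := Nat.exists_prime_and_dvd hN.ne'
  have hpΦ := (hdvd_iff p).1 ⟨r, hr⟩
  have hpm := hcon p hp hpΦ
  have hr1 : r ≠ 1 := by
    have := prime_lt_cyclotomic_eval_two hp hpm hm6 hpΦ
    rintro rfl
    omega
  obtain ⟨q, hq, hqr⟩ := Nat.exists_prime_and_dvd hr1
  have hqΦ := (hdvd_iff q).1 (hr ▸ dvd_mul_of_dvd_right hqr p)
  have hqp : q = p := eq_of_dvd_of_dvd_cyclotomic_eval hq hp (hcon q hq hqΦ) hpm hqΦ hpΦ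
  refine not_sq_dvd_cyclotomic_eval hp (odd_of_prime_dvd_cyclotomic_eval_two hp hpΦ) hpm hpΦ ?_
  rw [← hNΦ, hr, sq]
  exact_mod_cast mul_dvd_mul_left p (hqp ▸ hqr)

end Polynomial

theorem bang_theorem (m : ℕ) (hm : 1 < m) (hm6 : m ≠ 6) :
    ∃ p : ℕ, p.Prime ∧ p ∣ 2 ^ m - 1 ∧
      ∀ j : ℕ, 0 < j → j < m → ¬ p ∣ 2 ^ j - 1 := by
  obtain ⟨p, hp, hΦ, hpm⟩ := exists_prime_dvd_cyclotomic_eval_two_not_dvd hm hm6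
  have hord : orderOf (2 : ZMod p) = m := by
    simpa [(Nat.ordCompl_eq_self_iff_zero_or_not_dvd m hp).2 (Or.inr hpm)] using
      (isPrimitiveRoot_ordCompl_of_dvd_cyclotomic_eval hp hΦ).eq_orderOf.symm
  have hdvd_iff (j : ℕ) : p ∣ 2 ^ j - 1 ↔ m ∣ j := by
    simpa [hord] using Nat.dvd_pow_sub_one_iff_orderOf_dvd (n := p) (j := j) two_ne_zero
  refine ⟨p, hp, (hdvd_iff m).2 dvd_rfl, fun j hj hjm hpj => ?_⟩
  exact absurd (Nat.le_of_dvd hj ((hdvd_iff j).1 hpj)) (not_le.2 hjm)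
end

section
/- Let b be an even positive integer. Suppose that for some positive integer m, every odd residue class j modulo b satisfies gcd(j − 2^k, b) = 1 for some k with 1 ≤ k ≤ m. Then for every odd integer a, the arithmetic progression a (mod b) contains a number of the form p + 2^k with p prime. -/
theorem Int.exists_prime_modEq_of_isCoprime {a b : ℤ} (hb : b ≠ 0) (h : IsCoprime a b) :
    ∃ p : ℕ, p.Prime ∧ (p : ℤ) ≡ a [ZMOD b] := by
  obtain ⟨p, -, hp, hpa⟩ := Nat.forall_exists_prime_gt_and_zmodEq 0 (Int.natAbs_ne_zero.mpr hb)
    (by rwa [Int.natCast_natAbs, IsCoprime.abs_right_iff])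
  exact ⟨p, hp, Int.modEq_natAbs.mp hpa⟩

theorem chen_q2_lemma_general (b : ℤ) (hb : 0 < b) (m : ℕ)
    (h : ∀ j : ℤ, Odd j → ∃ k : ℕ, 1 ≤ k ∧ k ≤ m ∧ Int.gcd (j - 2 ^ k) b = 1) :
    ∀ a : ℤ, Odd a → ∃ (p : ℕ) (k : ℕ), p.Prime ∧
      ((p : ℤ) + 2 ^ k ≡ a [ZMOD b]) := by
  intro a ha
  obtain ⟨k, -, -, hgcd⟩ := h a ha
  obtain ⟨p, hp, hpa⟩ :=
    Int.exists_prime_modEq_of_isCoprime hb.ne' (Int.isCoprime_iff_gcd_eq_one.mpr hgcd)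
  exact ⟨p, k, hp, by simpa using hpa.add_right (2 ^ k)⟩

theorem chen_q2_lemma (b : ℤ) (hb : 0 < b) (hbe : Even b) (m : ℕ) (hm : 1 ≤ m)
    (h : ∀ j : ℤ, Odd j → ∃ k : ℕ, 1 ≤ k ∧ k ≤ m ∧ Int.gcd (j - 2 ^ k) b = 1) :
    ∀ a : ℤ, Odd a → ∃ (p : ℕ) (k : ℕ), p.Prime ∧
      ((p : ℤ) + 2 ^ k ≡ a [ZMOD b]) :=
  chen_q2_lemma_general b hb m h
end

section
/- None of the primes 3, 5, 7, 13, 17, 241 is congruent to 7629217 modulo 11184810; moreover, for every natural number k and every x ≡ 7629217 (mod 11184810), x − 2^k is never equal to any of 3, 5, 7, 13, 17, 241. -/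
/-!
Every `x ≡ 7629217 (mod 11184810)` satisfies `x ≡ 1 (mod 7)` and `x ≡ 1 (mod 3)`. The powers of `2`
are `1, 2, 4` modulo `7` and `1, 2` modulo `3`, so `x - 2 ^ k` is `0, 4` or `6` modulo `7` and `0`
or `2` modulo `3`. None of `3, 5, 17, 241` (residues `3, 5, 3, 3` modulo `7`) and neither of
`7, 13` (residue `1` modulo `3`) has such residues.
-/

lemma intCast_sub_two_pow_mem_zmod_seven {x : ℤ} (hx : x ≡ 1 [ZMOD 7]) (k : ℕ) :
    ((x - 2 ^ k : ℤ) : ZMod 7) ∈ ({0, 4, 6} : Finset (ZMod 7)) := by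
  push_cast
  rw [(ZMod.intCast_eq_intCast_iff x 1 7).mpr hx,
    pow_eq_pow_mod k (by decide : (2 : ZMod 7) ^ 3 = 1)]
  have hk : k % 3 < 3 := Nat.mod_lt k (by norm_num)
  interval_cases k % 3 <;> decide

lemma intCast_sub_two_pow_mem_zmod_three {x : ℤ} (hx : x ≡ 1 [ZMOD 3]) (k : ℕ) :
    ((x - 2 ^ k : ℤ) : ZMod 3) ∈ ({0, 2} : Finset (ZMod 3)) := by
  push_cast
  rw [(ZMod.intCast_eq_intCast_iff x 1 3).mpr hx,
    pow_eq_pow_mod k (by decide : (2 : ZMod 3) ^ 2 = 1)]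
  have hk : k % 2 < 2 := Nat.mod_lt k (by norm_num)
  interval_cases k % 2 <;> decide

theorem erdos_primes_not_in_progression :
    (∀ c : ℤ, c ∈ ({3, 5, 7, 13, 17, 241} : Set ℤ) →
      ¬ (c ≡ 7629217 [ZMOD 11184810])) ∧
    (∀ k : ℕ, ∀ x : ℤ, x ≡ 7629217 [ZMOD 11184810] →
      x - 2 ^ k ∉ ({3, 5, 7, 13, 17, 241} : Set ℤ)) := by
  constructor
  · rintro c (rfl | rfl | rfl | rfl | rfl | rfl) <;> decide
  · rintro k x hx hc
    have h7 := intCast_sub_two_pow_mem_zmod_seven ((hx.of_dvd (by norm_num)).trans (by decide)) k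
    have h3 := intCast_sub_two_pow_mem_zmod_three ((hx.of_dvd (by norm_num)).trans (by decide)) k
    rcases hc with hc | hc | hc | hc | hc | hc <;> rw [hc] at h7 h3 <;> revert h7 h3 <;> decide
end
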